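/- arXiv:2304.10152 — 5 statements merged into one kernel-verified Lean document; each statement's English description precedes it below -/
import Mathlib

section
/- Let a < b be real numbers, let λ ∈ ℝ, set z = λ(b−a), and assume z ≠ −4. Let t_0 = (a+b)/2 − (b−a)·√2/4 and t_1 = (a+b)/2 + (b−a)·√2/4 be the two shifted Chebyshev–Gauss nodes on [a,b]. If p : ℝ → ℝ is a polynomial function of degree at most 2 satisfying p(a) = u_a and the collocation conditions p'(t_m) = −λ·p(t_m) for m = 0,1, then p(b) = ((4−z)²/(4+z)²)·u_a = ((z²−8z+16)/(z²+8z+16))·u_a. In other words, the stability function of the Chebyshev–Gauss spectral collocation method with M = 1 for the test equation u' = −λu is R_CG(z,1) = (4−z)²/(4+z)². -/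
/-- Stability function of the Chebyshev–Gauss spectral collocation method with
`M = 1` for the test equation `u' = -λ u`: `R_CG(z,1) = (4 - z)²/(4 + z)²`. -/
theorem stmt_1 (a b lam u_a z : ℝ) (hab : a < b) (hz : z = lam * (b - a))
    (hz4 : z ≠ -4) (p : Polynomial ℝ) (hdeg : p.degree ≤ 2)
    (hpa : p.eval a = u_a)
    (hcol0 : (Polynomial.derivative p).eval ((a + b) / 2 - (b - a) * Real.sqrt 2 / 4)
      = -lam * p.eval ((a + b) / 2 - (b - a) * Real.sqrt 2 / 4))
    (hcol1 : (Polynomial.derivative p).eval ((a + b) / 2 + (b - a) * Real.sqrt 2 / 4)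
      = -lam * p.eval ((a + b) / 2 + (b - a) * Real.sqrt 2 / 4)) :
    p.eval b = (4 - z) ^ 2 / (4 + z) ^ 2 * u_a ∧
      p.eval b = (z ^ 2 - 8 * z + 16) / (z ^ 2 + 8 * z + 16) * u_a := by
  subst hz
  set s : ℝ := Real.sqrt 2 with hsdef
  have hs : s ^ 2 = 2 := Real.sq_sqrt (by norm_num)
  have hspos : 0 < s := Real.sqrt_pos.mpr (by norm_num)
  have hba : (0:ℝ) < b - a := by linarith
  set c0 := p.coeff 0
  set c1 := p.coeff 1
  set c2 := p.coeff 2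
  have hnd : p.natDegree < 3 :=
    lt_of_le_of_lt (Polynomial.natDegree_le_iff_degree_le.mpr hdeg) (by norm_num)
  have heval : ∀ x : ℝ, p.eval x = c0 + c1 * x + c2 * x ^ 2 := by
    intro x
    rw [Polynomial.eval_eq_sum_range' hnd]
    simp only [Finset.sum_range_succ, Finset.sum_range_zero]
    ring
  have hndd : (Polynomial.derivative p).natDegree < 2 :=
    lt_of_le_of_lt (Polynomial.natDegree_derivative_le p) (by omega)
  have hevald : ∀ x : ℝ, (Polynomial.derivative p).eval x = c1 + 2 * c2 * x := by
    intro x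
    rw [Polynomial.eval_eq_sum_range' hndd]
    simp only [Finset.sum_range_succ, Finset.sum_range_zero,
      Polynomial.coeff_derivative]
    push_cast
    ring
  rw [hevald, heval] at hcol0 hcol1
  rw [heval] at hpa
  rw [heval]
  have hGd : (b - a) * s / 2 * (2 * c2 + lam * c1 + lam * c2 * (a + b)) = 0 := by
    linear_combination hcol1 - hcol0
  have hG : 2 * c2 + lam * c1 + lam * c2 * (a + b) = 0 := by
    have hne : (b - a) * s / 2 ≠ 0 := (div_pos (mul_pos hba hspos) two_pos).ne'
    exact (mul_eq_zero.mp hGd).resolve_left hne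
  have hF : c1 + c2 * (a + b) + lam * (c0 + c1 * (a + b) / 2
      + c2 * ((a + b) ^ 2 / 4 + (b - a) ^ 2 / 8)) = 0 := by
    linear_combination (hcol0 + hcol1) / 2 - (lam * c2 * (b - a) ^ 2 / 16) * hs
  have h4 : 4 + lam * (b - a) ≠ 0 := by
    intro h; apply hz4; linarith
  have key : c0 + c1 * b + c2 * b ^ 2
      = (4 - lam * (b - a)) ^ 2 / (4 + lam * (b - a)) ^ 2 * u_a := by
    rw [← hpa, div_mul_eq_mul_div, eq_div_iff (pow_ne_zero 2 h4)]
    linear_combination (16 * (b - a)) * hF + (lam * (b - a) ^ 3) * hG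
  refine ⟨key, ?_⟩
  rw [key]
  ring_nf
end

section
/- For every real z with 0 < z ≤ 8 + 6√2, one has |z² − 8z|/(4+z)² ≤ 1/3. -/
/-- For `0 < z ≤ 8 + 6√2`, the `M = 1` contraction factor satisfies
`|z² - 8z|/(4+z)² ≤ 1/3`. -/
theorem stmt_6 (z : ℝ) (hz : 0 < z) (hz' : z ≤ 8 + 6 * Real.sqrt 2) :
    |z ^ 2 - 8 * z| / (4 + z) ^ 2 ≤ 1 / 3 := by
  have hs : Real.sqrt 2 ^ 2 = 2 := Real.sq_sqrt (by norm_num)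
  have hs0 : 0 ≤ Real.sqrt 2 := Real.sqrt_nonneg 2
  rw [div_le_iff₀ (by positivity)]
  rcases abs_cases (z ^ 2 - 8 * z) with ⟨h, _⟩ | ⟨h, _⟩ <;> rw [h] <;>
    nlinarith [sq_nonneg (z - 2), sq_nonneg (z - 8 - 6 * Real.sqrt 2), hz.le]
end

section
/- Let z > 0, R ∈ ℝ, and set K = (1+z)·|R − 1/(1+z)|/z. Suppose the doubly indexed real sequence (e^k_n), k ≥ 0, n ≥ 0, satisfies e^k_0 = 0 for all k ≥ 1 and the parareal error recurrence e^{k+1}_{n+1} = (1/(1+z))·e^{k+1}_n + (R − 1/(1+z))·e^k_n for all k ≥ 0, n ≥ 0. If B ≥ 0 is such that |e^0_n| ≤ B for all n, then for every k ≥ 0 and every n, |e^k_n| ≤ K^k·B. -/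
/-- Linear convergence of the scalar parareal iteration: if the errors satisfy
the parareal error recurrence with backward Euler coarse propagator and fine
stability value `R`, they contract with factor `K = (1+z)|R - 1/(1+z)|/z`. -/
theorem stmt_10 (z R : ℝ) (hz : 0 < z) (K : ℝ)
    (hK : K = (1 + z) * |R - 1 / (1 + z)| / z)
    (e : ℕ → ℕ → ℝ) (h0 : ∀ k, 1 ≤ k → e k 0 = 0)
    (hrec : ∀ k n, e (k + 1) (n + 1)
      = 1 / (1 + z) * e (k + 1) n + (R - 1 / (1 + z)) * e k n)
    (B : ℝ) (hB : 0 ≤ B) (hinit : ∀ n, |e 0 n| ≤ B) :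
    ∀ k n, |e k n| ≤ K ^ k * B := by
  have h1z : (0:ℝ) < 1 + z := by linarith
  set c := 1 / (1 + z) with hc
  have hc0 : 0 < c := by positivity
  have hKnn : 0 ≤ K := by
    rw [hK]
    positivity
  have hkey : c * K + |R - c| = K := by
    have habs : 0 ≤ |R - c| := abs_nonneg _
    rw [hK, hc]
    field_simp
  intro k
  induction k with
  | zero => intro n; simpa using hinit n
  | succ k ih =>
    intro n
    induction n with
    | zero =>
      rw [h0 (k + 1) (by omega)]
      simp only [abs_zero]
      positivity
    | succ n ihn =>
      have h1 : |e (k + 1) (n + 1)| ≤ c * |e (k + 1) n| + |R - c| * |e k n| := by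
        rw [hrec k n]
        calc |c * e (k + 1) n + (R - c) * e k n|
            ≤ |c * e (k + 1) n| + |(R - c) * e k n| := abs_add_le _ _
          _ = c * |e (k + 1) n| + |R - c| * |e k n| := by
              rw [abs_mul, abs_mul, abs_of_pos hc0]
      have h2 : c * |e (k + 1) n| + |R - c| * |e k n|
          ≤ c * (K ^ (k + 1) * B) + |R - c| * (K ^ k * B) := by
        exact add_le_add
          (mul_le_mul_of_nonneg_left ihn hc0.le)
          (mul_le_mul_of_nonneg_left (ih n) (abs_nonneg _))
      have h3 : c * (K ^ (k + 1) * B) + |R - c| * (K ^ k * B)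
          = (c * K + |R - c|) * (K ^ k * B) := by ring
      rw [h3, hkey] at h2
      calc |e (k + 1) (n + 1)| ≤ _ := h1
        _ ≤ K * (K ^ k * B) := h2
        _ = K ^ (k + 1) * B := by ring
end

section
/- Let A be a real m×m matrix diagonalized as V⁻¹AV = diag(λ_1,…,λ_m) with V invertible and λ_i > 0 for all i, let ΔT > 0, and let Q be a real m×m matrix with V⁻¹QV = diag(R_1,…,R_m) for some R_i ∈ ℝ. Set G = (I + ΔT·A)⁻¹ and ρ = max_i (1+ΔTλ_i)·|R_i − 1/(1+ΔTλ_i)|/(ΔTλ_i). Suppose the vectors e^k_n ∈ ℝ^m satisfy e^k_0 = 0 for all k ≥ 1 and e^{k+1}_{n+1} = G·e^{k+1}_n + (Q − G)·e^k_n for all k ≥ 0, n ≥ 0. If B ≥ 0 is such that ‖V⁻¹e^0_n‖_∞ ≤ B for all n, then for every k ≥ 0 and every n, ‖V⁻¹e^k_n‖_∞ ≤ ρ^k·B. -/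
/-!
In the eigenbasis of `A` all matrices involved are diagonal, so the error recurrence decouples into
scalar recurrences `ε^{k+1}_{n+1} = g ε^{k+1}_n + (R - g) ε^k_n` with `g = 1/(1 + ΔT λ) ∈ (0, 1)`.
The factor `K` is designed so that `|R - g| = (1 - g) K(ΔT λ) ≤ (1 - g) ρ`. Hence if `|ε^k| ≤ M`,
then `|ε^{k+1}_{n+1}| ≤ g |ε^{k+1}_n| + (1 - g) ρ M` is bounded by a convex combination, and
induction on `n` gives `|ε^{k+1}| ≤ ρ M`.
-/

open Matrix

theorem abs_le_mul_of_recurrence {g c ρ M : ℝ} {x y : ℕ → ℝ} (hg : 0 ≤ g) (hρ : 0 ≤ ρ)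
    (hc : |c| ≤ (1 - g) * ρ) (hy : ∀ n, |y n| ≤ M) (hx0 : x 0 = 0)
    (hx : ∀ n, x (n + 1) = g * x n + c * y n) (n : ℕ) : |x n| ≤ ρ * M := by
  have hM : 0 ≤ M := (abs_nonneg _).trans (hy 0)
  induction n with
  | zero => simpa [hx0] using mul_nonneg hρ hM
  | succ n ih =>
    have hstep : |c * y n| ≤ (1 - g) * ρ * M := by
      rw [abs_mul]
      exact mul_le_mul hc (hy n) (abs_nonneg _) ((abs_nonneg c).trans hc)
    calc |x (n + 1)| ≤ |g * x n| + |c * y n| := hx n ▸ abs_add_le _ _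
      _ ≤ g * (ρ * M) + (1 - g) * ρ * M := by
          rw [abs_mul, abs_of_nonneg hg]
          gcongr
      _ = ρ * M := by ring

theorem abs_sub_inv_one_add_le {z r K : ℝ} (hz : 0 < z)
    (hK : (1 + z) * |r - 1 / (1 + z)| / z ≤ K) : |r - (1 + z)⁻¹| ≤ (1 - (1 + z)⁻¹) * K := by
  have hsub : 1 - (1 + z)⁻¹ = z / (1 + z) := by field_simp; ring
  calc |r - (1 + z)⁻¹| = (1 - (1 + z)⁻¹) * ((1 + z) * |r - 1 / (1 + z)| / z) := by
        rw [hsub, one_div]; field_simp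
    _ ≤ (1 - (1 + z)⁻¹) * K := by rw [hsub]; gcongr

namespace Matrix

variable {n α : Type*} [Fintype n] [DecidableEq n]

section CommRing

variable [CommRing α] {V : Matrix n n α}

theorem inv_mul_mulVec_mulVec_of_inv_mul_mul_eq_diagonal (hV : IsUnit V.det) {M : Matrix n n α}
    {d : n → α} (h : V⁻¹ * M * V = diagonal d) (x : n → α) :
    V⁻¹ *ᵥ (M *ᵥ x) = diagonal d *ᵥ (V⁻¹ *ᵥ x) := by
  rw [mulVec_mulVec, mulVec_mulVec, ← h, Matrix.mul_assoc _ V, mul_nonsing_inv V hV, Matrix.mul_one]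

theorem inv_mul_inv_mul_eq_inv (hV : IsUnit V.det) (M : Matrix n n α) :
    V⁻¹ * M⁻¹ * V = (V⁻¹ * M * V)⁻¹ := by
  rw [mul_inv_rev, mul_inv_rev, nonsing_inv_nonsing_inv V hV, Matrix.mul_assoc]

theorem inv_mul_one_add_smul_mul (hV : IsUnit V.det) (t : α) (A : Matrix n n α) :
    V⁻¹ * (1 + t • A) * V = 1 + t • (V⁻¹ * A * V) := by
  rw [Matrix.mul_add, Matrix.add_mul, Matrix.mul_one, nonsing_inv_mul V hV, Matrix.mul_smul,
    Matrix.smul_mul]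

theorem inv_mulVec_mulVec_add_sub_mulVec_apply (hV : IsUnit V.det) {G Q : Matrix n n α}
    {g r : n → α} (hG : V⁻¹ * G * V = diagonal g) (hQ : V⁻¹ * Q * V = diagonal r) (x y : n → α)
    (i : n) :
    (V⁻¹ *ᵥ (G *ᵥ x + (Q - G) *ᵥ y)) i = g i * (V⁻¹ *ᵥ x) i + (r i - g i) * (V⁻¹ *ᵥ y) i := by
  have hQG : V⁻¹ * (Q - G) * V = diagonal (r - g) := by
    rw [Matrix.mul_sub, Matrix.sub_mul, hQ, hG, diagonal_sub]
    rfl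
  rw [mulVec_add, Pi.add_apply, inv_mul_mulVec_mulVec_of_inv_mul_mul_eq_diagonal hV hG,
    inv_mul_mulVec_mulVec_of_inv_mul_mul_eq_diagonal hV hQG, mulVec_diagonal, mulVec_diagonal,
    Pi.sub_apply]

end CommRing

theorem inv_diagonal_of_ne_zero [Field α] {d : n → α} (hd : ∀ i, d i ≠ 0) :
    (diagonal d)⁻¹ = diagonal d⁻¹ :=
  inv_eq_left_inv <| by
    rw [diagonal_mul_diagonal, ← diagonal_one]
    exact congrArg diagonal (funext fun i => inv_mul_cancel₀ (hd i))

theorem inv_mul_inv_one_add_smul_mul_eq_diagonal [Field α] {V A : Matrix n n α} {lam : n → α}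
    (hV : IsUnit V.det) (hA : V⁻¹ * A * V = diagonal lam) (t : α) (ht : ∀ i, 1 + t * lam i ≠ 0) :
    V⁻¹ * (1 + t • A)⁻¹ * V = diagonal fun i => (1 + t * lam i)⁻¹ := by
  have hdiag : (1 : Matrix n n α) + t • diagonal lam = diagonal fun i => 1 + t * lam i := by
    rw [← diagonal_one, ← diagonal_smul, diagonal_add]; rfl
  rw [inv_mul_inv_mul_eq_inv hV, inv_mul_one_add_smul_mul hV, hA, hdiag, inv_diagonal_of_ne_zero ht]
  rfl

end Matrix

theorem stmt_11_general (m : ℕ) (A V Q : Matrix (Fin m) (Fin m) ℝ)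
    (lam R : Fin m → ℝ) (hV : IsUnit V.det)
    (hA : V⁻¹ * A * V = Matrix.diagonal lam) (hlam : ∀ i, 0 < lam i)
    (ΔT : ℝ) (hΔT : 0 < ΔT)
    (hQ : V⁻¹ * Q * V = Matrix.diagonal R)
    (G : Matrix (Fin m) (Fin m) ℝ) (hG : G = (1 + ΔT • A)⁻¹)
    (ρ : ℝ)
    (hρ : ρ = ⨆ i, (1 + ΔT * lam i) * |R i - 1 / (1 + ΔT * lam i)| / (ΔT * lam i))
    (e : ℕ → ℕ → Fin m → ℝ) (h0 : ∀ k, 1 ≤ k → e k 0 = 0)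
    (hrec : ∀ k n, e (k + 1) (n + 1)
      = G.mulVec (e (k + 1) n) + (Q - G).mulVec (e k n))
    (B : ℝ) (hinit : ∀ n, ‖V⁻¹.mulVec (e 0 n)‖ ≤ B) :
    ∀ k n, ‖V⁻¹.mulVec (e k n)‖ ≤ ρ ^ k * B := by
  have hz : ∀ i, 0 < ΔT * lam i := fun i => mul_pos hΔT (hlam i)
  set g : Fin m → ℝ := fun i => (1 + ΔT * lam i)⁻¹
  have hGd : V⁻¹ * G * V = diagonal g :=
    hG ▸ inv_mul_inv_one_add_smul_mul_eq_diagonal hV hA ΔT fun i => (by linarith [hz i] : (0 : ℝ) < 1 + ΔT * lam i).ne'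
  have hcoord : ∀ k n i, (V⁻¹ *ᵥ e (k + 1) (n + 1)) i
      = g i * (V⁻¹ *ᵥ e (k + 1) n) i + (R i - g i) * (V⁻¹ *ᵥ e k n) i := fun k n i => by
    rw [hrec]; exact inv_mulVec_mulVec_add_sub_mulVec_apply hV hGd hQ _ _ i
  set K : Fin m → ℝ := fun i => (1 + ΔT * lam i) * |R i - 1 / (1 + ΔT * lam i)| / (ΔT * lam i)
  have hρ0 : 0 ≤ ρ := hρ ▸ Real.iSup_nonneg fun i => by have := hz i; positivity
  have hfactor : ∀ i, |R i - g i| ≤ (1 - g i) * ρ := fun i =>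
    abs_sub_inv_one_add_le (hz i) (hρ ▸ le_ciSup (Set.finite_range K).bddAbove i)
  intro k
  induction k with
  | zero => simpa using hinit
  | succ k ih =>
    intro n
    rw [pow_succ', mul_assoc]
    refine (pi_norm_le_iff_of_nonneg (mul_nonneg hρ0 ((norm_nonneg _).trans (ih 0)))).2 fun i => ?_
    rw [Real.norm_eq_abs]
    refine abs_le_mul_of_recurrence (x := fun n => (V⁻¹ *ᵥ e (k + 1) n) i)
      (inv_pos.2 (by linarith [hz i])).le hρ0
      (hfactor i) (fun n => (norm_le_pi_norm _ i).trans (ih n)) ?_ (fun n => hcoord k n i) n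
    simp [h0 (k + 1) (Nat.le_add_left 1 k)]

/-- Convergence of the parareal algorithm for a diagonalizable system with
positive eigenvalues, backward Euler coarse propagator and a fine propagator
diagonalized in the same basis: in the eigenbasis max-norm, the errors
contract with the factor `ρ = max_i K(ΔT λ_i)`. -/
theorem stmt_11 (m : ℕ) (hm : 0 < m) (A V Q : Matrix (Fin m) (Fin m) ℝ)
    (lam R : Fin m → ℝ) (hV : IsUnit V.det)
    (hA : V⁻¹ * A * V = Matrix.diagonal lam) (hlam : ∀ i, 0 < lam i)
    (ΔT : ℝ) (hΔT : 0 < ΔT)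
    (hQ : V⁻¹ * Q * V = Matrix.diagonal R)
    (G : Matrix (Fin m) (Fin m) ℝ) (hG : G = (1 + ΔT • A)⁻¹)
    (ρ : ℝ)
    (hρ : ρ = ⨆ i, (1 + ΔT * lam i) * |R i - 1 / (1 + ΔT * lam i)| / (ΔT * lam i))
    (e : ℕ → ℕ → Fin m → ℝ) (h0 : ∀ k, 1 ≤ k → e k 0 = 0)
    (hrec : ∀ k n, e (k + 1) (n + 1)
      = G.mulVec (e (k + 1) n) + (Q - G).mulVec (e k n))
    (B : ℝ) (hB : 0 ≤ B) (hinit : ∀ n, ‖V⁻¹.mulVec (e 0 n)‖ ≤ B) :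
    ∀ k n, ‖V⁻¹.mulVec (e k n)‖ ≤ ρ ^ k * B :=
  stmt_11_general m A V Q lam R hV hA hlam ΔT hΔT hQ G hG ρ hρ e h0 hrec B hinit
end

section
/- For every real z_max > 0 there exists a natural number M*_min such that for every M ≥ M*_min the following holds: for every z with 0 < z ≤ z_max and every polynomial p of degree at most M+1 satisfying p(0) = 1 and the collocation conditions p'(t_m) = −z·p(t_m) for all m = 0,…,M, where t_m = (1 + τ_m)/2 and τ_m = −cos((2m+1)π/(2M+2)), one has |p(1) − 1/(1+z)| ≤ (1/3)·z/(1+z); equivalently, the contraction factor of the Parareal-CG algorithm satisfies K_CG(z,M) ≤ 1/3 for all z ∈ (0, z_max]. -/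
/-!
The residual `r = p' + z p` of the collocation polynomial has degree at most `M + 1` and vanishes
at the `M + 1` nodes, so `r = c ω` with `ω` the monic nodal polynomial. Telescoping gives
`p(0) = ∑ₖ (-1)ᵏ r⁽ᵏ⁾(0) / z^(k+1)`; since the roots of `ω` lie in `[0, 1]`, its coefficients
alternate in sign, the terms of this sum do not cancel, and `p(0) = 1` forces
`|c| ≤ z^(M+2) / (M+1)!`. Variation of constants with `|ω| ≤ 1` on `[0, 1]` then gives
`|p(1) - e^(-z)| ≤ |c|`, which is at most `z / (300 (1 + z))` once `M` is large, uniformly for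
`z ≤ z_max`. Finally `|e^(-z) - 1/(1+z)| ≤ 0.33 z / (1 + z)` (the optimal constant is about
`0.298`), and `1/300 + 33/100 = 1/3`.
-/

open Real Polynomial Finset
open scoped Nat

theorem one_sub_mul_exp_neg_le {z : ℝ} (hz : 0 ≤ z) : 1 - (1 + z) * exp (-z) ≤ 33 / 100 * z := by
  rcases le_or_gt z (33 / 100) with hsmall | hz₀
  · nlinarith [one_sub_le_exp_neg z]
  rcases le_or_gt (100 / 33) z with hlarge | hz₁
  · nlinarith [exp_pos (-z)]
  -- On the cell `[k/20, (k+1)/20]` both factors are monotone, and `exp (-1/20) ≥ 19/20`.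
  set k := ⌊20 * z⌋₊
  have hk : (k : ℝ) ≤ 20 * z := Nat.floor_le (by positivity)
  have hk' : 20 * z < k + 1 := Nat.lt_floor_add_one _
  have hexp : (19 / 20 : ℝ) ^ (k + 1) ≤ exp (-z) :=
    calc (19 / 20 : ℝ) ^ (k + 1) ≤ exp (-(1 / 20)) ^ (k + 1) := by
          gcongr; linarith [one_sub_le_exp_neg (1 / 20)]
      _ = exp (-((k + 1) / 20)) := by rw [← exp_nat_mul]; push_cast; ring_nf
      _ ≤ exp (-z) := exp_le_exp.mpr (by linarith)
  have hcell : 1 - (1 + k / 20) * (19 / 20 : ℝ) ^ (k + 1) ≤ 33 / 100 * (k / 20) := by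
    have : 6 ≤ k := Nat.le_floor (by push_cast; linarith)
    have : k ≤ 60 :=
      Nat.le_of_lt_succ ((Nat.floor_lt (by positivity)).mpr (by push_cast; linarith))
    interval_cases k <;> norm_num
  nlinarith [pow_pos (show (0 : ℝ) < 19 / 20 by norm_num) (k + 1)]

theorem abs_exp_neg_sub_inv_one_add_le {z : ℝ} (hz : 0 ≤ z) :
    |exp (-z) - 1 / (1 + z)| ≤ 33 / 100 * (z / (1 + z)) := by
  have h1z : 0 < 1 + z := by linarith
  have hlow : 1 / (1 + z) - exp (-z) = (1 - (1 + z) * exp (-z)) / (1 + z) := by field_simp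
  have hle : (1 + z) * exp (-z) ≤ 1 :=
    calc (1 + z) * exp (-z) ≤ exp z * exp (-z) := by gcongr; linarith [add_one_le_exp z]
      _ = 1 := by rw [← exp_add, add_neg_cancel, exp_zero]
  rw [abs_sub_comm, hlow, abs_of_nonneg (div_nonneg (by linarith) h1z.le), ← mul_div_assoc]
  exact div_le_div_of_nonneg_right (one_sub_mul_exp_neg_le hz) h1z.le

theorem eq_C_mul_prod_X_sub_C_of_eval_eq_zero {R : Type*} [CommRing R] [IsDomain R]
    {s : Finset R} {q : R[X]} (hq : q.natDegree ≤ #s) (hroots : ∀ x ∈ s, q.eval x = 0) :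
    q = C (q.coeff #s) * ∏ x ∈ s, (X - C x) := by
  have hmonic : (∏ x ∈ s, (X - C x)).Monic := monic_prod_X_sub_C id s
  have hdeg : (∏ x ∈ s, (X - C x)).natDegree = #s := natDegree_finsetProd_X_sub_C_eq_card s id
  refine eq_of_degree_sub_lt_of_eval_finset_eq s ?_ fun x hx => ?_
  · rw [degree_lt_iff_coeff_zero]
    intro m hm
    have hm : #s ≤ m := by exact_mod_cast hm
    rcases hm.eq_or_lt with rfl | hlt
    · rw [coeff_sub, coeff_C_mul, ← hdeg, hmonic.coeff_natDegree, mul_one, hdeg, sub_self]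
    · rw [coeff_sub, coeff_C_mul, coeff_eq_zero_of_natDegree_lt (hq.trans_lt hlt),
        coeff_eq_zero_of_natDegree_lt (hdeg.trans_lt hlt), mul_zero, sub_zero]
  · rw [hroots x hx, eval_mul, eval_prod, prod_eq_zero hx (by simp), mul_zero]

theorem eval_zero_eq_sum_coeff_derivative_add_C_mul {K : Type*} [Field K] {p : K[X]} {z : K}
    (hz : z ≠ 0) {N : ℕ} (hp : p.natDegree ≤ N) :
    p.eval 0 = ∑ k ∈ range (N + 1),
      (-1) ^ k * k ! * (derivative p + C z * p).coeff k / z ^ (k + 1) := by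
  -- Each term is `a k - a (k + 1)` for `a k = (-1)^k k! p_k / z^k`.
  set a : ℕ → K := fun k => (-1) ^ k * k ! * p.coeff k / z ^ k
  have hterm : ∀ k, (-1) ^ k * k ! * (derivative p + C z * p).coeff k / z ^ (k + 1)
      = a k - a (k + 1) := by
    intro k
    simp only [a, coeff_add, coeff_derivative, coeff_C_mul, Nat.factorial_succ]
    push_cast
    field_simp
    ring
  rw [sum_congr rfl fun k _ => hterm k, sum_range_sub', ← coeff_zero_eq_eval_zero]
  simp [a, coeff_eq_zero_of_natDegree_lt (Nat.lt_succ_of_le hp)]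

theorem Multiset.esymm_nonneg {R : Type*} [CommSemiring R] [PartialOrder R] [IsOrderedRing R]
    {s : Multiset R} (hs : ∀ x ∈ s, 0 ≤ x) (k : ℕ) :
    0 ≤ s.esymm k :=
  Multiset.sum_nonneg fun _ hx => by
    obtain ⟨t, ht, rfl⟩ := Multiset.mem_map.mp hx
    exact Multiset.prod_nonneg fun x hx =>
      hs x (Multiset.mem_of_le (Multiset.mem_powersetCard.mp ht).1 hx)

/-- With nonnegative roots the coefficients of `∏ (X - x)` alternate in sign, so all terms of the
sum have the sign `(-1)^#s` and it is dominated by its top term. -/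
theorem factorial_div_le_abs_sum_coeff_prod_X_sub_C {s : Finset ℝ} (hs : ∀ x ∈ s, 0 ≤ x)
    {z : ℝ} (hz : 0 < z) :
    (#s)! / z ^ (#s + 1) ≤ |∑ k ∈ range (#s + 1),
      (-1) ^ k * k ! * (∏ x ∈ s, (X - C x)).coeff k / z ^ (k + 1)| := by
  set b : ℕ → ℝ := fun k => k ! * s.val.esymm (#s - k) / z ^ (k + 1)
  have hb : ∀ k, 0 ≤ b k := fun k => by
    have := Multiset.esymm_nonneg (s := s.val) hs (#s - k)
    positivity
  have hterm : ∀ k ∈ range (#s + 1),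
      (-1) ^ k * k ! * (∏ x ∈ s, (X - C x)).coeff k / z ^ (k + 1) = (-1) ^ #s * b k := by
    intro k hk
    have hk : k ≤ #s := Nat.lt_succ_iff.mp (mem_range.mp hk)
    rw [prod_eq_multiset_prod, Multiset.prod_X_sub_C_coeff s.val hk]
    have hsign : (-1 : ℝ) ^ k * (-1) ^ (#s - k) = (-1) ^ #s := by
      rw [← pow_add, Nat.add_sub_cancel' hk]
    rw [card_val, ← hsign]
    ring
  rw [sum_congr rfl hterm, ← mul_sum, abs_mul, abs_pow, abs_neg, abs_one, one_pow, one_mul,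
    abs_of_nonneg (sum_nonneg fun k _ => hb k)]
  calc (#s)! / z ^ (#s + 1) = b #s := by simp [b, Multiset.esymm]
    _ ≤ ∑ k ∈ range (#s + 1), b k := single_le_sum (fun k _ => hb k) (self_mem_range_succ _)

theorem abs_sub_exp_neg_mul_le {f f' : ℝ → ℝ} {z B : ℝ} (hz : 0 ≤ z)
    (hf : ∀ x ∈ Set.Icc (0 : ℝ) 1, HasDerivAt f (f' x) x)
    (hB : ∀ x ∈ Set.Ico (0 : ℝ) 1, |f' x + z * f x| ≤ B) :
    |f 1 - exp (-z) * f 0| ≤ B := by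
  -- Mean value inequality for the integrating factor `g x = exp (z x) * f x`.
  have hg : ∀ x ∈ Set.Icc (0 : ℝ) 1, HasDerivWithinAt (fun t => exp (z * t) * f t)
      (exp (z * x) * (f' x + z * f x)) (Set.Icc 0 1) x := by
    intro x hx
    have hexp : HasDerivAt (fun t => exp (z * t)) (exp (z * x) * z) x := by
      simpa using ((hasDerivAt_id x).const_mul z).exp
    exact ((hexp.mul (hf x hx)).congr_deriv (by ring)).hasDerivWithinAt
  have hbound : ∀ x ∈ Set.Ico (0 : ℝ) 1, ‖exp (z * x) * (f' x + z * f x)‖ ≤ exp z * B := by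
    intro x hx
    rw [norm_mul, norm_of_nonneg (exp_pos _).le]
    exact mul_le_mul (exp_le_exp.mpr (by nlinarith [hx.1, hx.2])) (hB x hx) (abs_nonneg _)
      (exp_pos _).le
  have hmvt := norm_image_sub_le_of_norm_deriv_le_segment' hg hbound 1 (by simp)
  have hscale : f 1 - exp (-z) * f 0 = exp (-z) * (exp (z * 1) * f 1 - exp (z * 0) * f 0) := by
    rw [mul_sub, ← mul_assoc, ← exp_add]; simp
  rw [hscale, abs_mul, abs_of_pos (exp_pos _)]
  calc exp (-z) * |exp (z * 1) * f 1 - exp (z * 0) * f 0| ≤ exp (-z) * (exp z * B) := by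
        gcongr; simpa using hmvt
    _ = B := by rw [← mul_assoc, ← exp_add]; simp

theorem abs_eval_one_sub_exp_neg_mul_le {s : Finset ℝ} (hs : ∀ x ∈ s, x ∈ Set.Icc (0 : ℝ) 1)
    {z : ℝ} (hz : 0 < z) {p : ℝ[X]} (hp : p.natDegree ≤ #s)
    (hcol : ∀ x ∈ s, (derivative p).eval x = -z * p.eval x) :
    |p.eval 1 - exp (-z) * p.eval 0| ≤ z ^ (#s + 1) / (#s)! * |p.eval 0| := by
  set w : ℝ[X] := ∏ x ∈ s, (X - C x)
  set q : ℝ[X] := derivative p + C z * p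
  have hq : q.natDegree ≤ #s :=
    (natDegree_add_le _ _).trans <| max_le ((natDegree_derivative_le p).trans (by omega))
      ((natDegree_C_mul_le _ _).trans hp)
  have hqw : q = C (q.coeff #s) * w :=
    eq_C_mul_prod_X_sub_C_of_eval_eq_zero hq fun x hx => by simp [q, hcol x hx]
  set c := q.coeff #s
  set S := ∑ k ∈ range (#s + 1), (-1) ^ k * k ! * w.coeff k / z ^ (k + 1)
  have hp0 : p.eval 0 = c * S := by
    rw [eval_zero_eq_sum_coeff_derivative_add_C_mul hz.ne' hp, mul_sum]
    refine sum_congr rfl fun k _ => ?_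
    rw [show derivative p + C z * p = C c * w from hqw, coeff_C_mul]
    ring
  have hS : (#s)! / z ^ (#s + 1) ≤ |S| :=
    factorial_div_le_abs_sum_coeff_prod_X_sub_C (fun x hx => (hs x hx).1) hz
  have hc : |c| ≤ z ^ (#s + 1) / (#s)! * |p.eval 0| := by
    have hS' : 1 ≤ z ^ (#s + 1) / (#s)! * |S| :=
      calc 1 = z ^ (#s + 1) / (#s)! * ((#s)! / z ^ (#s + 1)) := by field_simp
        _ ≤ z ^ (#s + 1) / (#s)! * |S| := by gcongr
    calc |c| = |c| * 1 := (mul_one _).symm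
      _ ≤ |c| * (z ^ (#s + 1) / (#s)! * |S|) := by gcongr
      _ = z ^ (#s + 1) / (#s)! * |p.eval 0| := by rw [hp0, abs_mul]; ring
  have hw : ∀ x ∈ Set.Icc (0 : ℝ) 1, |w.eval x| ≤ 1 := by
    intro x hx
    rw [eval_prod, abs_prod]
    refine prod_le_one (fun _ _ => abs_nonneg _) fun y hy => ?_
    simp only [eval_sub, eval_X, eval_C, abs_le]
    constructor <;> linarith [hx.1, hx.2, (hs y hy).1, (hs y hy).2]
  refine (abs_sub_exp_neg_mul_le hz.le (fun x _ => p.hasDerivAt x) fun x hx => ?_).trans hc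
  have hqx := congrArg (eval x) hqw
  simp only [q, eval_add, eval_mul, eval_C] at hqx
  rw [hqx, abs_mul]
  exact mul_le_of_le_one_right (abs_nonneg c) (hw x (Set.Ico_subset_Icc_self hx))

theorem exists_forall_one_add_mul_pow_div_factorial_le (a : ℝ) {ε : ℝ} (hε : 0 < ε) :
    ∃ N : ℕ, ∀ n ≥ N, ∀ z ∈ Set.Icc 0 a, (1 + z) * (z ^ n / n !) ≤ ε := by
  have hlim := (FloorSemiring.tendsto_pow_div_factorial_atTop a).const_mul (1 + a)
  obtain ⟨N, hN⟩ := Filter.eventually_atTop.mp (hlim.eventually_lt_const (by rwa [mul_zero]))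
  refine ⟨N, fun n hn z hz => le_trans ?_ (hN n hn).le⟩
  obtain ⟨hz₀, hza⟩ := hz
  have ha : 0 ≤ 1 + a := by linarith
  gcongr

noncomputable def chebyshevGaussNode (M m : ℕ) : ℝ :=
  (1 + -cos ((2 * m + 1) * π / (2 * M + 2))) / 2

theorem chebyshevGaussNode_mem_Icc (M m : ℕ) : chebyshevGaussNode M m ∈ Set.Icc 0 1 := by
  unfold chebyshevGaussNode
  constructor <;> linarith [neg_one_le_cos ((2 * m + 1) * π / (2 * M + 2)),
    cos_le_one ((2 * m + 1) * π / (2 * M + 2))]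

theorem chebyshevGaussNode_injOn (M : ℕ) :
    Set.InjOn (chebyshevGaussNode M) (range (M + 1) : Set ℕ) := by
  have hangle : ∀ m ∈ range (M + 1), (2 * m + 1) * π / (2 * M + 2) ∈ Set.Icc 0 π := by
    intro m hm
    have hm : (m : ℝ) ≤ M := by exact_mod_cast Nat.lt_succ_iff.mp (mem_range.mp hm)
    refine ⟨by positivity, ?_⟩
    rw [div_le_iff₀ (by positivity)]
    nlinarith [pi_pos]
  intro m hm m' hm' h
  have hcos := injOn_cos (hangle m hm) (hangle m' hm')
    (by unfold chebyshevGaussNode at h; linarith)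
  field_simp at hcos
  exact_mod_cast (show (m : ℝ) = m' by linarith [pi_pos])

theorem stmt_18_general (zmax : ℝ) :
    ∃ Mmin : ℕ, ∀ M : ℕ, Mmin ≤ M →
      ∀ z : ℝ, 0 < z → z ≤ zmax →
        ∀ p : Polynomial ℝ, p.degree ≤ M + 1 → p.eval 0 = 1 →
          (∀ m : ℕ, m ≤ M →
            (Polynomial.derivative p).eval
                ((1 + -Real.cos ((2 * m + 1) * π / (2 * M + 2))) / 2)
              = -z * p.eval ((1 + -Real.cos ((2 * m + 1) * π / (2 * M + 2))) / 2)) →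
          |p.eval 1 - 1 / (1 + z)| ≤ 1 / 3 * (z / (1 + z)) := by
  obtain ⟨N, hN⟩ :=
    exists_forall_one_add_mul_pow_div_factorial_le zmax (ε := 1 / 300) (by norm_num)
  refine ⟨N, fun M hM z hz hzle p hdeg hp0 hcol => ?_⟩
  set s := (range (M + 1)).image (chebyshevGaussNode M)
  have hcard : #s = M + 1 := by rw [card_image_of_injOn (chebyshevGaussNode_injOn M), card_range]
  have hcoll := abs_eval_one_sub_exp_neg_mul_le (s := s)
    (forall_mem_image.mpr fun m _ => chebyshevGaussNode_mem_Icc M m) hz (p := p)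
    (by rw [hcard]; exact natDegree_le_of_degree_le (by exact_mod_cast hdeg))
    (forall_mem_image.mpr fun m hm => hcol m (Nat.lt_succ_iff.mp (mem_range.mp hm)))
  rw [hcard, hp0, abs_one, mul_one, mul_one] at hcoll
  have hsmall : z ^ (M + 1 + 1) / (M + 1)! ≤ 1 / 300 * (z / (1 + z)) :=
    calc z ^ (M + 1 + 1) / (M + 1)! = z / (1 + z) * ((1 + z) * (z ^ (M + 1) / (M + 1)!)) := by
          field_simp; ring
      _ ≤ z / (1 + z) * (1 / 300) := by gcongr; exact hN (M + 1) (by omega) z ⟨hz.le, hzle⟩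
      _ = 1 / 300 * (z / (1 + z)) := by ring
  calc |p.eval 1 - 1 / (1 + z)|
      ≤ |p.eval 1 - exp (-z)| + |exp (-z) - 1 / (1 + z)| := abs_sub_le _ _ _
    _ ≤ 1 / 300 * (z / (1 + z)) + 33 / 100 * (z / (1 + z)) :=
        add_le_add (hcoll.trans hsmall) (abs_exp_neg_sub_inv_one_add_le hz.le)
    _ = 1 / 3 * (z / (1 + z)) := by ring

/-- For every `z_max > 0` there is an `M*_min` such that for all `M ≥ M*_min`
the contraction factor of the Parareal-CG algorithm satisfies
`K_CG(z,M) ≤ 1/3` for all `z ∈ (0, z_max]`. -/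
theorem stmt_18 (zmax : ℝ) (hzmax : 0 < zmax) :
    ∃ Mmin : ℕ, ∀ M : ℕ, Mmin ≤ M →
      ∀ z : ℝ, 0 < z → z ≤ zmax →
        ∀ p : Polynomial ℝ, p.degree ≤ M + 1 → p.eval 0 = 1 →
          (∀ m : ℕ, m ≤ M →
            (Polynomial.derivative p).eval
                ((1 + -Real.cos ((2 * m + 1) * π / (2 * M + 2))) / 2)
              = -z * p.eval ((1 + -Real.cos ((2 * m + 1) * π / (2 * M + 2))) / 2)) →
          |p.eval 1 - 1 / (1 + z)| ≤ 1 / 3 * (z / (1 + z)) :=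
  stmt_18_general zmax
end
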